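/- Assume the derivation of F is surjective. Then the map φ : F ⊕ (F ⊗_C F) → F⟨∂^{-1}⟩ defined by φ(a + Σ_{i=1}^n a_i ⊗ b_i) = a + Σ_{i=1}^n a_i∂^{-1}b_i is a bijection. -/

import Mathlib

open Finset

/-- A derivation on a field `F`. -/
structure IsDerivation {F : Type*} [Field F] (d : F → F) : Prop where
  map_add : ∀ a b : F, d (a + b) = d a + d b
  leibniz : ∀ a b : F, d (a * b) = d a * b + a * d b

namespace IsDerivation

variable {F : Type*} [Field F] {d : F → F}

theorem map_zero' (hd : IsDerivation d) : d 0 = 0 := by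
  have h := hd.map_add 0 0
  simp only [add_zero] at h
  exact (left_eq_add.mp h)

theorem map_one' (hd : IsDerivation d) : d 1 = 0 := by
  have h := hd.leibniz 1 1
  simp only [mul_one, one_mul] at h
  exact (left_eq_add.mp h)

theorem map_neg' (hd : IsDerivation d) (a : F) : d (-a) = - d a := by
  have h := hd.map_add a (-a)
  simp only [add_neg_cancel, hd.map_zero'] at h
  exact (neg_eq_of_add_eq_zero_right h.symm).symm

end IsDerivation

/-- The subfield of constants of a derivation. -/
def constants (F : Type*) [Field F] (d : F → F) (hd : IsDerivation d) : Subfield F where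
  carrier := {a : F | d a = 0}
  zero_mem' := hd.map_zero'
  one_mem' := hd.map_one'
  add_mem' := by
    intro a b ha hb
    simp only [Set.mem_setOf_eq] at *
    rw [hd.map_add, ha, hb, add_zero]
  neg_mem' := by
    intro a ha
    simp only [Set.mem_setOf_eq] at *
    rw [hd.map_neg', ha, neg_zero]
  mul_mem' := by
    intro a b ha hb
    simp only [Set.mem_setOf_eq] at *
    rw [hd.leibniz, ha, hb, zero_mul, mul_zero, add_zero]
  inv_mem' := by
    intro a ha
    simp only [Set.mem_setOf_eq] at *
    by_cases h0 : a = 0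
    · rw [h0, inv_zero]; exact hd.map_zero'
    · have h := hd.leibniz a a⁻¹
      rw [mul_inv_cancel₀ h0, hd.map_one', ha, zero_mul, zero_add] at h
      have h2 : a * d a⁻¹ = 0 := h.symm
      rcases mul_eq_zero.mp h2 with h3 | h3
      · exact absurd h3 h0
      · exact h3
/-- `A` is the ring of differential operators `F⟨∂⟩` over the differential field `(F, d)`:
it contains `F` via `ι`, an element `δ` (the symbol `∂`) satisfying `∂a = a∂ + a'`, and every
element has a unique expression `Σ ι(aᵢ) ∂^i`. -/
structure IsDiffOpRing {F : Type*} [Field F] (d : F → F) (A : Type*) [Ring A]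
    (ι : F →+* A) (δ : A) : Prop where
  comm : ∀ a : F, δ * ι a = ι a * δ + ι (d a)
  repr : ∀ P : A, ∃! c : ℕ →₀ F, P = c.sum fun i x => ι x * δ ^ i

/-- The action of the differential operator with coefficients `a 0, …, a n`
(i.e. `Σ_{i ≤ n} aᵢ ∂^i`) on an element `y` of `F`. -/
def diffOpAct {F : Type*} [Field F] (d : F → F) (n : ℕ) (a : ℕ → F) (y : F) : F :=
  ∑ i ∈ Finset.range (n + 1), a i * d^[i] y

/-- A differential field is linearly differentially closed if every differential operator of
positive degree has a nonzero zero. -/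
def LinDiffClosed {F : Type*} [Field F] (d : F → F) : Prop :=
  ∀ (n : ℕ) (a : ℕ → F), 0 < n → a n ≠ 0 → ∃ y : F, y ≠ 0 ∧ diffOpAct d n a y = 0

/-- `P ∈ F⟨∂⟩` has degree `n`, i.e. `P = Σ_{i ≤ n} ι(aᵢ) δ^i` with `aₙ ≠ 0`. -/
def HasDeg {F : Type*} [Field F] {A : Type*} [Ring A] (ι : F →+* A) (δ : A)
    (P : A) (n : ℕ) : Prop :=
  ∃ a : ℕ → F, a n ≠ 0 ∧ P = ∑ i ∈ Finset.range (n + 1), ι (a i) * δ ^ i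

/-- `K` is the division ring of quotients of the (Ore) domain `A`: `A` embeds in `K` via `j`
and every element of `K` has the form `P⁻¹ Q` with `P, Q ∈ A`, `P ≠ 0`. -/
structure IsQuotientDivisionRing (A : Type*) [Ring A] (K : Type*) [DivisionRing K]
    (j : A →+* K) : Prop where
  inj : Function.Injective j
  quot : ∀ f : K, ∃ P Q : A, P ≠ 0 ∧ f = (j P)⁻¹ * j Q

/-- `f = P⁻¹ Q` is a minimal presentation of `f ∈ F(∂)`: a presentation where `P` has the
smallest possible degree. -/
def IsMinPres {F : Type*} [Field F] {A : Type*} [Ring A] (ι : F →+* A) (δ : A)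
    {K : Type*} [DivisionRing K] (j : A →+* K) (f : K) (P Q : A) : Prop :=
  P ≠ 0 ∧ f = (j P)⁻¹ * j Q ∧
    ∀ (P' Q' : A) (n n' : ℕ), P' ≠ 0 → f = (j P')⁻¹ * j Q' →
      HasDeg ι δ P n → HasDeg ι δ P' n' → n ≤ n'

/-- The map `φ : F ⊕ (F ⊗_C F) → F(∂)`, `φ(a + Σ aᵢ ⊗ bᵢ) = a + Σ aᵢ ∂⁻¹ bᵢ`. -/
noncomputable def intOpMap {F : Type*} [Field F] (d : F → F) (hd : IsDerivation d)
    {A : Type*} [Ring A] (ι : F →+* A) (δ : A) (hA : IsDiffOpRing d A ι δ)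
    {K : Type*} [DivisionRing K] (j : A →+* K) :
    F × (TensorProduct (constants F d hd) F F) → K :=
  fun p => j (ι p.1) +
    TensorProduct.liftAddHom
      (AddMonoidHom.mk'
        (fun a => AddMonoidHom.mk' (fun b => j (ι a) * (j δ)⁻¹ * j (ι b))
          (by intro b₁ b₂; simp [map_add, mul_add]))
        (by intro a₁ a₂; ext b; simp [map_add, add_mul]))
      (by
        intro r a b
        simp only [AddMonoidHom.mk'_apply]
        have hr : d (r : F) = 0 := r.2
        have hcomm : Commute (j δ) (j (ι (r : F))) := by
          have h := hA.comm (r : F)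
          rw [hr, map_zero, add_zero] at h
          show j δ * j (ι (r : F)) = j (ι (r : F)) * j δ
          rw [← map_mul, ← map_mul, h]
        have hux : (j δ)⁻¹ * j (ι (r : F)) = j (ι (r : F)) * (j δ)⁻¹ :=
          hcomm.inv_left₀.eq
        have hpx : j (ι a) * j (ι (r : F)) = j (ι (r : F)) * j (ι a) := by
          rw [← map_mul, ← map_mul, ← map_mul, ← map_mul, mul_comm a ((r : F))]
        have hra : (r • a : F) = (r : F) * a := rfl
        have hrb : (r • b : F) = (r : F) * b := rfl
        rw [hra, hrb]
        simp only [map_mul, mul_assoc]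
        rw [← mul_assoc ((j δ)⁻¹) (j (ι (r : F))) (j (ι b)), hux,
          mul_assoc (j (ι (r : F))) ((j δ)⁻¹) (j (ι b)),
          ← mul_assoc (j (ι a)) (j (ι (r : F))) ((j δ)⁻¹ * j (ι b)), hpx,
          mul_assoc (j (ι (r : F))) (j (ι a)) ((j δ)⁻¹ * j (ι b))]) p.2


/-!
Let `u = ∂⁻¹`. Injectivity: choose a `C`-basis `(wᵢ)` of `F`, so that every tensor is
`Σ gᵢ ⊗ wᵢ`. The coefficient vectors `g` with `Σ gᵢ u wᵢ ∈ F⟨∂⟩` are stable under scaling by `F`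
and, since `∂ x u = x + x' u`, under differentiating the coefficients. Differentiating a
normalised vector of minimal support shows that, if some nonzero `g` qualifies, then so does a
nonzero constant `c`; but then `Σ cᵢ u wᵢ = u (Σ cᵢ wᵢ)` with `Σ cᵢ wᵢ ≠ 0`, which puts `u` in
`F⟨∂⟩`, impossible as `∂` has no left inverse there.

Surjectivity onto `F⟨∂⁻¹⟩`: the image is closed under multiplication by the integration by parts
identity `u b u = B u - u B` for `B' = b`, which is where surjectivity of the derivation enters.
-/

namespace IsDiffOpRing

variable {F : Type*} [Field F] {d : F → F} {A : Type*} [Ring A] {ι : F →+* A} {δ : A}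
  {K : Type*} [DivisionRing K] {j : A →+* K}

theorem delta_ne_zero (hA : IsDiffOpRing d A ι δ) : δ ≠ 0 := by
  intro h
  obtain ⟨_, _, huniq⟩ := hA.repr δ
  have h1 : δ = (Finsupp.single 1 (1 : F)).sum fun i x => ι x * δ ^ i := by simp [h]
  have h0 : δ = (0 : ℕ →₀ F).sum fun i x => ι x * δ ^ i := by simp [h]
  exact one_ne_zero (Finsupp.single_eq_zero.mp ((huniq _ h1).trans (huniq _ h0).symm))

theorem mul_delta_ne_one (hA : IsDiffOpRing d A ι δ) (S : A) : S * δ ≠ 1 := by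
  intro hS
  obtain ⟨c, hc, -⟩ := hA.repr S
  obtain ⟨_, _, huniq⟩ := hA.repr 1
  have hshift : (1 : A) = (c.mapDomain (· + 1)).sum fun i x => ι x * δ ^ i := by
    rw [← hS, hc, Finsupp.sum_mapDomain_index (by simp) (by simp [add_mul]), Finsupp.sum_mul]
    simp only [pow_succ, mul_assoc]
  have hone : (1 : A) = (Finsupp.single 0 (1 : F)).sum fun i x => ι x * δ ^ i := by simp
  have h0 := DFunLike.congr_fun ((huniq _ hshift).trans (huniq _ hone).symm) 0
  rw [Finsupp.mapDomain_of_notMem_range _ _ (by simp), Finsupp.single_eq_same] at h0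
  exact zero_ne_one h0

theorem map_delta_ne_zero (hA : IsDiffOpRing d A ι δ) (hj : Function.Injective j) : j δ ≠ 0 :=
  (map_ne_zero_iff j hj).mpr hA.delta_ne_zero

theorem inv_map_delta_notMem_range (hA : IsDiffOpRing d A ι δ) (hj : Function.Injective j) :
    (j δ)⁻¹ ∉ Set.range j := by
  rintro ⟨S, hS⟩
  refine hA.mul_delta_ne_one S (hj ?_)
  rw [map_mul, hS, inv_mul_cancel₀ (hA.map_delta_ne_zero hj), map_one]

theorem map_delta_mul_mul_inv (hA : IsDiffOpRing d A ι δ) (hj : Function.Injective j) (a : F) :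
    j δ * (j (ι a) * (j δ)⁻¹) = j (ι a) + j (ι (d a)) * (j δ)⁻¹ := by
  rw [← mul_assoc, ← map_mul, hA.comm, map_add, map_mul, add_mul, mul_assoc,
    mul_inv_cancel₀ (hA.map_delta_ne_zero hj), mul_one]

theorem commute_inv_map_delta (hA : IsDiffOpRing d A ι δ) {c : F} (hc : d c = 0) :
    Commute (j δ)⁻¹ (j (ι c)) := by
  refine Commute.inv_left₀ ?_
  change j δ * j (ι c) = j (ι c) * j δ
  rw [← map_mul, hA.comm, hc, map_zero, add_zero, map_mul]

theorem inv_mul_mul_inv_of_deriv_eq (hA : IsDiffOpRing d A ι δ) (hj : Function.Injective j)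
    {b B : F} (hB : d B = b) :
    (j δ)⁻¹ * j (ι b) * (j δ)⁻¹ = j (ι B) * (j δ)⁻¹ - (j δ)⁻¹ * j (ι B) := by
  have h := congrArg ((j δ)⁻¹ * ·) (hA.map_delta_mul_mul_inv hj B)
  simp only [← mul_assoc, inv_mul_cancel₀ (hA.map_delta_ne_zero hj), one_mul, mul_add, hB] at h
  rw [h, add_sub_cancel_left]

end IsDiffOpRing

theorem IsDerivation.exists_ne_zero_forall_deriv_eq_zero {F : Type*} [Field F] {d : F → F}
    (hd : IsDerivation d) {B : Type*} {S : Set (B →₀ F)}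
    (hsmul : ∀ a : F, ∀ g ∈ S, a • g ∈ S) (hderiv : ∀ g ∈ S, g.mapRange d hd.map_zero' ∈ S)
    {g : B →₀ F} (hg : g ∈ S) (hg0 : g ≠ 0) : ∃ c ∈ S, c ≠ 0 ∧ ∀ i, d (c i) = 0 := by
  induction hn : g.support.card using Nat.strong_induction_on generalizing g with
  | _ n ih =>
  obtain ⟨i₀, hi₀⟩ := Finsupp.support_nonempty_iff.mpr hg0
  have hgi₀ : g i₀ ≠ 0 := Finsupp.mem_support_iff.mp hi₀
  set m := (g i₀)⁻¹ • g
  have hm : m ∈ S := hsmul _ g hg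
  have hmi₀ : m i₀ = 1 := inv_mul_cancel₀ hgi₀
  by_cases hconst : ∀ i, d (m i) = 0
  · exact ⟨m, hm, fun h => one_ne_zero (hmi₀.symm.trans (by rw [h, Finsupp.zero_apply])), hconst⟩
  obtain ⟨i, hi⟩ := not_forall.mp hconst
  refine ih _ ?_ (hderiv m hm) (fun h => hi (by simpa using DFunLike.congr_fun h i)) rfl
  have hsub : (m.mapRange d hd.map_zero').support ⊆ g.support :=
    Finsupp.support_mapRange.trans (Finsupp.support_smul_eq (inv_ne_zero hgi₀)).subset
  rw [← hn]
  refine Finset.card_lt_card ((Finset.ssubset_iff_of_subset hsub).mpr ⟨i₀, hi₀, ?_⟩)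
  simp [hmi₀, hd.map_one']

section IntegrationOperators

variable {F : Type*} [Field F] {d : F → F} {A : Type*} [Ring A] {ι : F →+* A} {δ : A}
  {K : Type*} [DivisionRing K] {j : A →+* K} {B : Type*}

noncomputable def intOpSum (ι : F →+* A) (δ : A) (j : A →+* K) (w : B → F) (g : B →₀ F) : K :=
  g.sum fun i x => j (ι x) * (j δ)⁻¹ * j (ι (w i))

theorem intOpSum_smul (w : B → F) (a : F) (g : B →₀ F) :
    intOpSum ι δ j w (a • g) = j (ι a) * intOpSum ι δ j w g := by
  rw [intOpSum, intOpSum, Finsupp.sum_smul_index (fun _ => by simp), Finsupp.mul_sum]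
  simp only [map_mul, mul_assoc]

theorem map_delta_mul_intOpSum (hd : IsDerivation d) (hA : IsDiffOpRing d A ι δ)
    (hj : Function.Injective j) (w : B → F) (g : B →₀ F) :
    j δ * intOpSum ι δ j w g
      = intOpSum ι δ j w (g.mapRange d hd.map_zero') + j (ι (g.sum fun i x => x * w i)) := by
  rw [intOpSum, intOpSum, Finsupp.sum_mapRange_index (fun _ => by simp), Finsupp.mul_sum]
  simp only [map_finsuppSum]
  rw [← Finsupp.sum_add]
  refine Finsupp.sum_congr fun i _ => ?_
  rw [← mul_assoc, hA.map_delta_mul_mul_inv hj, add_mul, map_mul, map_mul, add_comm]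

theorem intOpSum_of_forall_deriv_eq_zero (hA : IsDiffOpRing d A ι δ) (w : B → F)
    {c : B →₀ F} (hc : ∀ i, d (c i) = 0) :
    intOpSum ι δ j w c = (j δ)⁻¹ * j (ι (c.sum fun i x => x * w i)) := by
  rw [intOpSum, map_finsuppSum, map_finsuppSum, Finsupp.mul_sum]
  refine Finsupp.sum_congr fun i _ => ?_
  rw [map_mul, map_mul, ← mul_assoc, (hA.commute_inv_map_delta (hc i)).eq]

theorem sum_mul_ne_zero_of_linearIndependent (hd : IsDerivation d) {w : B → F}
    (hw : LinearIndependent (constants F d hd) w) {c : B →₀ F} (hc : ∀ i, d (c i) = 0)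
    (hc0 : c ≠ 0) : (c.sum fun i x => x * w i) ≠ 0 := by
  obtain ⟨i, hi⟩ := Finsupp.support_nonempty_iff.mpr hc0
  intro hsum
  have := linearIndependent_iff'.mp hw c.support (fun i => ⟨c i, hc i⟩) hsum i hi
  exact Finsupp.mem_support_iff.mp hi (congrArg Subtype.val this)

theorem eq_zero_of_intOpSum_mem_range (hd : IsDerivation d) (hA : IsDiffOpRing d A ι δ)
    (hj : Function.Injective j) {w : B → F} (hw : LinearIndependent (constants F d hd) w)
    {g : B →₀ F} (hg : intOpSum ι δ j w g ∈ Set.range j) : g = 0 := by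
  by_contra hg0
  obtain ⟨c, ⟨P, hP⟩, hc0, hc⟩ :=
    hd.exists_ne_zero_forall_deriv_eq_zero (S := {g | intOpSum ι δ j w g ∈ Set.range j})
      (fun a g ⟨P, hP⟩ => ⟨ι a * P, by rw [intOpSum_smul, map_mul, hP]⟩)
      (fun g ⟨P, hP⟩ => ⟨δ * P - ι (g.sum fun i x => x * w i), by
        rw [map_sub, map_mul, hP, map_delta_mul_intOpSum hd hA hj, add_sub_cancel_right]⟩)
      hg hg0
  have hs := sum_mul_ne_zero_of_linearIndependent hd hw hc hc0
  rw [intOpSum_of_forall_deriv_eq_zero hA w hc] at hP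
  refine hA.inv_map_delta_notMem_range hj ⟨P * ι (c.sum fun i x => x * w i)⁻¹, ?_⟩
  rw [map_mul, hP, mul_assoc, ← map_mul, ← map_mul, mul_inv_cancel₀ hs, map_one, map_one, mul_one]

noncomputable def intOpTensorHom (d : F → F) (hd : IsDerivation d) (ι : F →+* A) (δ : A)
    (hA : IsDiffOpRing d A ι δ) (j : A →+* K) : TensorProduct (constants F d hd) F F →+ K :=
  TensorProduct.liftAddHom
    (AddMonoidHom.mk'
      (fun a => AddMonoidHom.mk' (fun b => j (ι a) * (j δ)⁻¹ * j (ι b))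
        (by intro b₁ b₂; simp [map_add, mul_add]))
      (by intro a₁ a₂; ext b; simp [map_add, add_mul]))
    (fun r a b => by
      change j (ι (r * a)) * (j δ)⁻¹ * j (ι b) = j (ι a) * (j δ)⁻¹ * j (ι (r * b))
      rw [mul_comm (r : F) a, map_mul, map_mul, map_mul, map_mul, mul_assoc (j (ι a)),
        ← (hA.commute_inv_map_delta r.2).eq]
      simp only [mul_assoc])

theorem intOpMap_apply (hd : IsDerivation d) (hA : IsDiffOpRing d A ι δ) (j : A →+* K)
    (p : F × TensorProduct (constants F d hd) F F) :
    intOpMap d hd ι δ hA j p = j (ι p.1) + intOpTensorHom d hd ι δ hA j p.2 := rfl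

theorem intOpTensorHom_tmul (hd : IsDerivation d) (hA : IsDiffOpRing d A ι δ) (a b : F) :
    intOpTensorHom d hd ι δ hA j (a ⊗ₜ b) = j (ι a) * (j δ)⁻¹ * j (ι b) := rfl

theorem eq_zero_of_intOpTensorHom_mem_range (hd : IsDerivation d) (hA : IsDiffOpRing d A ι δ)
    (hj : Function.Injective j) {t : TensorProduct (constants F d hd) F F}
    (ht : intOpTensorHom d hd ι δ hA j t ∈ Set.range j) : t = 0 := by
  let b := Module.Basis.ofVectorSpace (constants F d hd) F
  obtain ⟨g, rfl⟩ := TensorProduct.eq_repr_basis_right b t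
  have hg : intOpSum ι δ j b g ∈ Set.range j := by
    simpa [map_finsuppSum, intOpTensorHom_tmul, intOpSum] using ht
  rw [eq_zero_of_intOpSum_mem_range hd hA hj b.linearIndependent hg, Finsupp.sum_zero_index]

theorem intOpTensorHom_mem_closure (hd : IsDerivation d) (hA : IsDiffOpRing d A ι δ)
    (t : TensorProduct (constants F d hd) F F) :
    intOpTensorHom d hd ι δ hA j t ∈ Subring.closure (Set.range (j.comp ι) ∪ {(j δ)⁻¹}) := by
  induction t using TensorProduct.induction_on with
  | zero => simp
  | tmul a b =>
    have hι (x : F) : j (ι x) ∈ Subring.closure (Set.range (j.comp ι) ∪ {(j δ)⁻¹}) :=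
      Subring.subset_closure (Or.inl ⟨x, rfl⟩)
    exact Subring.mul_mem _ (Subring.mul_mem _ (hι a) (Subring.subset_closure (Or.inr rfl))) (hι b)
  | add s t hs ht => simpa using Subring.add_mem _ hs ht

theorem map_intOpTensorHom_mem_range (hd : IsDerivation d) (hA : IsDiffOpRing d A ι δ)
    {f : K →+ K} (hf : ∀ a b, f (intOpTensorHom d hd ι δ hA j (a ⊗ₜ b))
      ∈ (intOpTensorHom d hd ι δ hA j).range)
    (t : TensorProduct (constants F d hd) F F) :
    f (intOpTensorHom d hd ι δ hA j t) ∈ (intOpTensorHom d hd ι δ hA j).range := by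
  induction t using TensorProduct.induction_on with
  | zero => simp
  | tmul a b => exact hf a b
  | add s t hs ht => simpa using AddSubgroup.add_mem _ hs ht

theorem map_mul_intOpTensorHom_mem_range (hd : IsDerivation d) (hA : IsDiffOpRing d A ι δ)
    (a : F) (t : TensorProduct (constants F d hd) F F) :
    j (ι a) * intOpTensorHom d hd ι δ hA j t ∈ (intOpTensorHom d hd ι δ hA j).range :=
  map_intOpTensorHom_mem_range hd hA (f := AddMonoidHom.mulLeft (j (ι a)))
    (fun x y => ⟨(a * x) ⊗ₜ y, by simp [intOpTensorHom_tmul, mul_assoc]⟩) t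

theorem intOpTensorHom_mul_map_mem_range (hd : IsDerivation d) (hA : IsDiffOpRing d A ι δ)
    (t : TensorProduct (constants F d hd) F F) (c : F) :
    intOpTensorHom d hd ι δ hA j t * j (ι c) ∈ (intOpTensorHom d hd ι δ hA j).range :=
  map_intOpTensorHom_mem_range hd hA (f := AddMonoidHom.mulRight (j (ι c)))
    (fun x y => ⟨x ⊗ₜ (y * c), by simp [intOpTensorHom_tmul, mul_assoc]⟩) t

theorem intOpTensorHom_mul_mem_range (hd : IsDerivation d) (hA : IsDiffOpRing d A ι δ)
    (hj : Function.Injective j) (hsurj : Function.Surjective d)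
    (s t : TensorProduct (constants F d hd) F F) :
    intOpTensorHom d hd ι δ hA j s * intOpTensorHom d hd ι δ hA j t
      ∈ (intOpTensorHom d hd ι δ hA j).range := by
  refine map_intOpTensorHom_mem_range hd hA
    (f := AddMonoidHom.mulRight (intOpTensorHom d hd ι δ hA j t)) (fun a b => ?_) s
  refine map_intOpTensorHom_mem_range hd hA
    (f := AddMonoidHom.mulLeft (intOpTensorHom d hd ι δ hA j (a ⊗ₜ b))) (fun c e => ?_) t
  obtain ⟨W, hW⟩ := hsurj (b * c)
  refine ⟨(a * W) ⊗ₜ e - a ⊗ₜ (W * e), ?_⟩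
  calc intOpTensorHom d hd ι δ hA j ((a * W) ⊗ₜ e - a ⊗ₜ (W * e))
      = j (ι a) * (j (ι W) * (j δ)⁻¹ - (j δ)⁻¹ * j (ι W)) * j (ι e) := by
        simp only [map_sub, intOpTensorHom_tmul, map_mul, mul_sub, sub_mul, mul_assoc]
    _ = j (ι a) * ((j δ)⁻¹ * j (ι (b * c)) * (j δ)⁻¹) * j (ι e) := by
        rw [hA.inv_mul_mul_inv_of_deriv_eq hj hW]
    _ = intOpTensorHom d hd ι δ hA j (a ⊗ₜ b) * intOpTensorHom d hd ι δ hA j (c ⊗ₜ e) := by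
        simp only [intOpTensorHom_tmul, map_mul, mul_assoc]

theorem closure_subset_range_intOpMap (hd : IsDerivation d) (hA : IsDiffOpRing d A ι δ)
    (hj : Function.Injective j) (hsurj : Function.Surjective d) :
    (Subring.closure (Set.range (j.comp ι) ∪ {(j δ)⁻¹}) : Set K)
      ⊆ Set.range (intOpMap d hd ι δ hA j) := by
  intro z hz
  induction hz using Subring.closure_induction with
  | mem z hz =>
    rcases hz with ⟨a, rfl⟩ | rfl
    · exact ⟨(a, 0), by simp [intOpMap_apply]⟩
    · exact ⟨(0, 1 ⊗ₜ 1), by simp [intOpMap_apply, intOpTensorHom_tmul]⟩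
  | zero => exact ⟨0, by simp [intOpMap_apply]⟩
  | one => exact ⟨(1, 0), by simp [intOpMap_apply]⟩
  | add _ _ _ _ hx hy =>
    obtain ⟨⟨a, s⟩, rfl⟩ := hx
    obtain ⟨⟨b, t⟩, rfl⟩ := hy
    exact ⟨(a + b, s + t), by simp only [intOpMap_apply, map_add]; abel⟩
  | neg _ _ hx =>
    obtain ⟨⟨a, s⟩, rfl⟩ := hx
    exact ⟨(-a, -s), by simp only [intOpMap_apply, map_neg]; abel⟩
  | mul _ _ _ _ hx hy =>
    obtain ⟨⟨a, s⟩, rfl⟩ := hx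
    obtain ⟨⟨b, t⟩, rfl⟩ := hy
    obtain ⟨s₁, hs₁⟩ := map_mul_intOpTensorHom_mem_range hd hA (j := j) a t
    obtain ⟨s₂, hs₂⟩ := intOpTensorHom_mul_map_mem_range hd hA (j := j) s b
    obtain ⟨s₃, hs₃⟩ := intOpTensorHom_mul_mem_range hd hA hj hsurj s t
    refine ⟨(a * b, s₁ + s₂ + s₃), ?_⟩
    simp only [intOpMap_apply, map_add, map_mul, add_mul, mul_add, hs₁, hs₂, hs₃]
    abel

theorem range_intOpMap_subset_closure (hd : IsDerivation d) (hA : IsDiffOpRing d A ι δ) :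
    Set.range (intOpMap d hd ι δ hA j)
      ⊆ (Subring.closure (Set.range (j.comp ι) ∪ {(j δ)⁻¹}) : Set K) := by
  rintro _ ⟨p, rfl⟩
  exact Subring.add_mem _ (Subring.subset_closure (Or.inl ⟨p.1, rfl⟩))
    (intOpTensorHom_mem_closure hd hA p.2)

end IntegrationOperators

theorem intOpMap_bijective_general {F : Type*} [Field F]
    (d : F → F) (hd : IsDerivation d)
    (hsurj : Function.Surjective d)
    {A : Type*} [Ring A] (ι : F →+* A) (δ : A) (hA : IsDiffOpRing d A ι δ)
    {K : Type*} [DivisionRing K] (j : A →+* K) (hK : IsQuotientDivisionRing A K j) :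
    Function.Injective (intOpMap d hd ι δ hA j) ∧
    Set.range (intOpMap d hd ι δ hA j)
      = (Subring.closure (Set.range (j.comp ι) ∪ {(j δ)⁻¹}) : Set K) := by
  have : Nontrivial A := j.domain_nontrivial
  refine ⟨fun p q hpq => ?_, (range_intOpMap_subset_closure hd hA).antisymm
    (closure_subset_range_intOpMap hd hA hK.inj hsurj)⟩
  rw [intOpMap_apply, intOpMap_apply] at hpq
  have h₂ : p.2 = q.2 := sub_eq_zero.mp <| eq_zero_of_intOpTensorHom_mem_range hd hA hK.inj
    ⟨ι (q.1 - p.1), by rw [map_sub, map_sub, map_sub, sub_eq_sub_iff_add_eq_add, ← hpq, add_comm]⟩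
  rw [h₂, add_left_inj] at hpq
  exact Prod.ext (ι.injective (hK.inj hpq)) h₂

/-- If the derivation of `F` is surjective, then
`φ : F ⊕ (F ⊗_C F) → F⟨∂⁻¹⟩`, `φ(a + Σ aᵢ ⊗ bᵢ) = a + Σ aᵢ ∂⁻¹ bᵢ`, is a bijection onto the
ring of integration operators `F⟨∂⁻¹⟩` (the subring of `F(∂)` generated by `F` and `∂⁻¹`). -/
theorem intOpMap_bijective {F : Type*} [Field F] [CharZero F]
    (d : F → F) (hd : IsDerivation d)
    (halg : IsAlgClosed (constants F d hd))
    (hne : constants F d hd ≠ ⊤)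
    (hsurj : Function.Surjective d)
    {A : Type*} [Ring A] (ι : F →+* A) (δ : A) (hA : IsDiffOpRing d A ι δ)
    {K : Type*} [DivisionRing K] (j : A →+* K) (hK : IsQuotientDivisionRing A K j) :
    Function.Injective (intOpMap d hd ι δ hA j) ∧
    Set.range (intOpMap d hd ι δ hA j)
      = (Subring.closure (Set.range (j.comp ι) ∪ {(j δ)⁻¹}) : Set K) :=
  intOpMap_bijective_general d hd hsurj ι δ hA j hK
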